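/- ∫_0^{π/2} 1/(x² + ln²(2 cos x)) dx − 2 · ∫_0^{π/2} x² / (x² + ln²(2 cos x))² dx = π/24. -/

import Mathlib

/-!
For `|x| < π/2` the point `z = e^{2ix}` satisfies `log (1 + z) = log (2 cos x) + i x`, and the
integrand is `Re (log (1 + z))⁻²`. Subtracting the principal part `z⁻² + z⁻¹` from
`(log (1 + z))⁻²` leaves a function holomorphic in the unit disc (with value `1/12` at `0`) and
continuous on its closure (it tends to `0` at `z = -1`). By the mean value property, and because
`z⁻²` and `z⁻¹` have mean zero on the unit circle, `Re (log (1 + z))⁻²` has mean `1/12` there.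
The integral over `x ∈ (0, π/2)` sweeps a half circle, on which the integrand is symmetric under
conjugation, so it equals `(2π / 12) / 4 = π / 24`.
-/

open Real Complex ComplexConjugate Filter Set Metric Topology Asymptotics

lemma log_one_add_ne_zero {z : ℂ} (h0 : z ≠ 0) (h1 : 1 + z ≠ 0) : Complex.log (1 + z) ≠ 0 := by
  intro h
  have := Complex.exp_log h1
  rw [h, Complex.exp_zero] at this
  exact h0 (by linear_combination -this)

lemma one_add_mem_slitPlane_of_norm_le_one {z : ℂ} (hz : ‖z‖ ≤ 1) (h : z ≠ -1) :
    1 + z ∈ slitPlane := by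
  rw [mem_slitPlane_iff, add_re, one_re, add_im, one_im, zero_add, or_iff_not_imp_right, not_not]
  intro him
  have hre : -1 ≤ z.re := by linarith [abs_le.1 ((abs_re_le_norm z).trans hz)]
  refine lt_of_le_of_ne (by linarith) fun hre' => h (Complex.ext ?_ (by simpa using him))
  simp only [neg_re, one_re]
  linarith

lemma tendsto_log_one_add_sub_div_pow_three :
    Tendsto (fun z : ℂ => (Complex.log (1 + z) - z + z ^ 2 / 2) / z ^ 3) (𝓝[≠] 0)
      (𝓝 (1 / 3)) := by
  have hTaylor (z : ℂ) : logTaylor 4 z = z - z ^ 2 / 2 + z ^ 3 / 3 := by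
    simp only [logTaylor, Finset.sum_range_succ, Finset.range_one, Finset.sum_singleton, zero_add,
      pow_one, pow_zero, mul_one, CharP.cast_eq_zero, div_zero, Nat.reduceAdd, even_two,
      Even.neg_pow, one_pow, one_mul, Nat.cast_one, div_one, Nat.cast_ofNat]
    ring
  have hO : (fun z => (Complex.log (1 + z) - logTaylor 4 z) * (z ^ 3)⁻¹) =O[𝓝[≠] 0]
      fun z : ℂ => z ^ 4 * (z ^ 3)⁻¹ :=
    ((log_sub_logTaylor_isBigO 3).mono nhdsWithin_le_nhds).mul (isBigO_refl _ _)
  have h0 : Tendsto (fun z : ℂ => z ^ 4 * (z ^ 3)⁻¹) (𝓝[≠] 0) (𝓝 0) := by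
    refine (tendsto_id.mono_left nhdsWithin_le_nhds).congr' ?_
    filter_upwards [self_mem_nhdsWithin] with z (hz : z ≠ 0)
    show z = z ^ 4 * (z ^ 3)⁻¹
    field_simp
  have h := (hO.trans_tendsto h0).const_add (1 / 3)
  rw [add_zero] at h
  refine h.congr' ?_
  filter_upwards [self_mem_nhdsWithin] with z (hz : z ≠ 0)
  rw [hTaylor]
  field_simp
  ring

lemma tendsto_inv_log_sq_nhdsNE_zero :
    Tendsto (fun u : ℂ => (Complex.log u ^ 2)⁻¹) (𝓝[≠] 0) (𝓝 0) := by
  have hlog : Tendsto (fun u : ℂ => ‖Complex.log u‖) (𝓝[≠] 0) atTop := by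
    refine tendsto_atTop_mono (fun u => ?_)
      (tendsto_abs_atBot_atTop.comp (Real.tendsto_log_nhdsGT_zero.comp tendsto_norm_nhdsNE_zero))
    simpa only [Function.comp_apply, log_re] using abs_re_le_norm (Complex.log u)
  rw [tendsto_zero_iff_norm_tendsto_zero]
  refine (((tendsto_pow_atTop two_ne_zero).comp hlog).inv_tendsto_atTop).congr fun u => ?_
  simp [norm_inv, norm_pow]

lemma inv_mul_sq_sub_inv_sq_sub_inv {z s v : ℂ} (hz : z ≠ 0) (hv : v ≠ 0)
    (hvs : v = 1 - z / 2 + s * z ^ 2) :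
    ((z * v) ^ 2)⁻¹ - (z ^ 2)⁻¹ - z⁻¹ =
      -(2 * s + (z * s - 1 / 2) ^ 2 + 2 * (z * s - 1 / 2) + z * (z * s - 1 / 2) ^ 2) / v ^ 2 := by
  field_simp
  subst hvs
  ring

lemma log_one_add_exp_two_mul_I {x : ℝ} (h₁ : -(π / 2) < x) (h₂ : x < π / 2) :
    Complex.log (1 + Complex.exp (↑(2 * x) * I)) = Real.log (2 * Real.cos x) + x * I := by
  have hcos : 0 < 2 * Real.cos x := by
    have := Real.cos_pos_of_mem_Ioo ⟨h₁, h₂⟩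
    positivity
  have h : 1 + Complex.exp (↑(2 * x) * I) = ↑(2 * Real.cos x) * Complex.exp (x * I) := by
    push_cast
    rw [Complex.two_cos, add_mul, ← Complex.exp_add, ← Complex.exp_add, neg_mul, neg_add_cancel,
      Complex.exp_zero, add_comm]
    ring_nf
  rw [h, log_ofReal_mul hcos (Complex.exp_ne_zero _), Complex.log_exp]
  all_goals rw [mul_I_im, ofReal_re]; linarith [Real.pi_pos]

lemma re_inv_sq_add_mul_I (a b : ℝ) :
    (((a : ℂ) + b * I) ^ 2)⁻¹.re = 1 / (b ^ 2 + a ^ 2) - 2 * (b ^ 2 / (b ^ 2 + a ^ 2) ^ 2) := by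
  have hsq : ((a : ℂ) + b * I) ^ 2 = ↑(a ^ 2 - b ^ 2) + ↑(2 * a * b) * I := by
    push_cast
    ring_nf
    rw [I_sq]
    ring
  rw [hsq, inv_re, normSq_add_mul_I, add_re, ofReal_re, re_ofReal_mul, I_re, mul_zero, add_zero,
    show (a ^ 2 - b ^ 2) ^ 2 + (2 * a * b) ^ 2 = (b ^ 2 + a ^ 2) ^ 2 by ring]
  rcases eq_or_ne (b ^ 2 + a ^ 2) 0 with h | h
  · simp [h]
  · field_simp
    ring

lemma intervalIntegral.integral_zero_two_mul_of_symm {E : Type*} [NormedAddCommGroup E]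
    [NormedSpace ℝ E] {f : ℝ → E} {a : ℝ} (hf : IntervalIntegrable f MeasureTheory.volume 0 (2 * a))
    (hsymm : ∀ x, f (2 * a - x) = f x) :
    ∫ x in (0 : ℝ)..2 * a, f x = 2 • ∫ x in (0 : ℝ)..a, f x := by
  have ha : a ∈ uIcc 0 (2 * a) := by
    rw [mem_uIcc]
    rcases le_total 0 a with h | h
    · exact Or.inl ⟨h, by linarith⟩
    · exact Or.inr ⟨by linarith, h⟩
  rw [← intervalIntegral.integral_add_adjacent_intervals
      (hf.mono_set (uIcc_subset_uIcc left_mem_uIcc ha))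
      (hf.mono_set (uIcc_subset_uIcc ha right_mem_uIcc)), two_nsmul]
  congr 1
  calc ∫ x in a..2 * a, f x = ∫ x in a..2 * a, f (2 * a - x) := by simp only [hsymm]
    _ = ∫ x in (0 : ℝ)..a, f x := by
      rw [intervalIntegral.integral_comp_sub_left, sub_self, two_mul, add_sub_cancel_right]

noncomputable def invSqLogOneAdd (z : ℂ) : ℂ := (Complex.log (1 + z) ^ 2)⁻¹

/-- The value `1/12` at `0` is the constant term of the Laurent expansion
`(log (1 + z))⁻² = z⁻² + z⁻¹ + 1/12 + O(z)`. -/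
noncomputable def invSqLogOneAddReg : ℂ → ℂ :=
  Function.update (fun z => invSqLogOneAdd z - (z ^ 2)⁻¹ - z⁻¹) 0 (1 / 12)

lemma tendsto_invSqLogOneAdd_sub :
    Tendsto (fun z => invSqLogOneAdd z - (z ^ 2)⁻¹ - z⁻¹) (𝓝[≠] 0) (𝓝 (1 / 12)) := by
  -- `log (1 + z) = z (1 - z/2 + s z²)` with `s → 1/3`, after which the poles cancel exactly.
  set s := fun z : ℂ => (Complex.log (1 + z) - z + z ^ 2 / 2) / z ^ 3
  let Φ : ℂ × ℂ → ℂ := fun p =>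
    -(2 * p.2 + (p.1 * p.2 - 1 / 2) ^ 2 + 2 * (p.1 * p.2 - 1 / 2) + p.1 * (p.1 * p.2 - 1 / 2) ^ 2) /
        (1 - p.1 / 2 + p.2 * p.1 ^ 2) ^ 2
  have hΦ : ContinuousAt Φ (0, 1 / 3) := by
    apply ContinuousAt.div (by fun_prop) (by fun_prop)
    norm_num
  have hlim : Tendsto (fun z => Φ (z, s z)) (𝓝[≠] 0) (𝓝 (1 / 12)) := by
    rw [show (1 / 12 : ℂ) = Φ (0, 1 / 3) by norm_num [Φ]]
    exact hΦ.tendsto.comp ((tendsto_id.mono_left nhdsWithin_le_nhds).prodMk_nhds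
      tendsto_log_one_add_sub_div_pow_three)
  have hne : ∀ᶠ z : ℂ in 𝓝[≠] 0, 1 + z ≠ 0 :=
    ((continuous_const.add continuous_id).tendsto' 0 1 (add_zero 1)).eventually_ne one_ne_zero
      |>.filter_mono nhdsWithin_le_nhds
  refine hlim.congr' ?_
  filter_upwards [self_mem_nhdsWithin, hne] with z (hz : z ≠ 0) h1
  have hL : Complex.log (1 + z) = z * (1 - z / 2 + s z * z ^ 2) := by
    simp only [s]
    field_simp
    ring
  have hv : 1 - z / 2 + s z * z ^ 2 ≠ 0 := by
    intro hv
    rw [hv, mul_zero] at hL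
    exact log_one_add_ne_zero hz h1 hL
  rw [invSqLogOneAdd, hL, inv_mul_sq_sub_inv_sq_sub_inv hz hv rfl]

lemma continuousAt_invSqLogOneAdd_neg_one : ContinuousAt invSqLogOneAdd (-1) := by
  rw [← continuousWithinAt_compl_self, ContinuousWithinAt]
  have h : Tendsto (fun z : ℂ => 1 + z) (𝓝[≠] (-1)) (𝓝[≠] 0) := by
    refine tendsto_nhdsWithin_of_tendsto_nhds_of_eventually_within _ ?_ ?_
    · exact ((continuous_const.add continuous_id).tendsto' (-1) 0 (by norm_num)).mono_left
        nhdsWithin_le_nhds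
    · filter_upwards [self_mem_nhdsWithin] with z (hz : z ≠ -1)
      exact fun (h : 1 + z = 0) => hz (by linear_combination h)
  have h1 : invSqLogOneAdd (-1) = 0 := by simp [invSqLogOneAdd]
  rw [h1]
  exact tendsto_inv_log_sq_nhdsNE_zero.comp h

lemma differentiableAt_invSqLogOneAdd {z : ℂ} (h0 : z ≠ 0) (hs : 1 + z ∈ slitPlane) :
    DifferentiableAt ℂ invSqLogOneAdd z :=
  ((((differentiableAt_const _).add differentiableAt_id).clog hs).pow 2).inv
    (pow_ne_zero 2 (log_one_add_ne_zero h0 (slitPlane_ne_zero hs)))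

lemma continuousAt_invSqLogOneAdd {z : ℂ} (hz : ‖z‖ ≤ 1) (h0 : z ≠ 0) :
    ContinuousAt invSqLogOneAdd z := by
  rcases eq_or_ne z (-1) with rfl | h1
  · exact continuousAt_invSqLogOneAdd_neg_one
  · exact (differentiableAt_invSqLogOneAdd h0
      (one_add_mem_slitPlane_of_norm_le_one hz h1)).continuousAt

lemma continuousOn_invSqLogOneAdd_sphere : ContinuousOn invSqLogOneAdd (sphere 0 1) :=
  fun z hz => (continuousAt_invSqLogOneAdd (mem_sphere_zero_iff_norm.1 hz).le
    (ne_zero_of_mem_sphere one_ne_zero ⟨z, hz⟩)).continuousWithinAt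

lemma continuousOn_invSqLogOneAddReg : ContinuousOn invSqLogOneAddReg (closedBall 0 1) := by
  intro z hz
  refine ContinuousAt.continuousWithinAt ?_
  rcases eq_or_ne z 0 with rfl | h0
  · exact continuousAt_update_same.2 tendsto_invSqLogOneAdd_sub
  · rw [invSqLogOneAddReg, continuousAt_update_of_ne h0]
    exact ((continuousAt_invSqLogOneAdd (mem_closedBall_zero_iff.1 hz) h0).sub
      ((continuousAt_id.pow 2).inv₀ (pow_ne_zero 2 h0))).sub (continuousAt_id.inv₀ h0)

lemma differentiableAt_invSqLogOneAddReg {z : ℂ} (hz : ‖z‖ < 1) (h0 : z ≠ 0) :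
    DifferentiableAt ℂ invSqLogOneAddReg z := by
  refine DifferentiableAt.congr_of_eventuallyEq ?_ (eventually_ne_nhds h0 |>.mono
    fun w hw => Function.update_of_ne hw _ _)
  exact ((differentiableAt_invSqLogOneAdd h0 (mem_slitPlane_of_norm_lt_one hz)).sub
    ((differentiableAt_id.pow 2).inv (pow_ne_zero 2 h0))).sub (differentiableAt_id.inv h0)

lemma circleAverage_invSqLogOneAddReg : circleAverage invSqLogOneAddReg 0 1 = 1 / 12 := by
  rw [circleAverage_of_differentiable_on_off_countable (countable_singleton 0)]
  · exact Function.update_self _ _ _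
  · simpa using continuousOn_invSqLogOneAddReg
  · intro z hz
    exact differentiableAt_invSqLogOneAddReg (by simpa using hz.1) hz.2

lemma circleAverage_inv_sq_add_inv : circleAverage (fun z : ℂ => (z ^ 2)⁻¹ + z⁻¹) 0 1 = 0 := by
  have h : Differentiable ℂ fun z : ℂ => z ^ 2 + z := by fun_prop
  have hinv := circleAverage_zero_one_congr_inv (f := fun z : ℂ => z ^ 2 + z)
  simp only [inv_pow] at hinv
  rw [hinv, (h.diffContOnCl (s := ball 0 |1|)).circleAverage]
  simp

lemma circleAverage_invSqLogOneAdd : circleAverage invSqLogOneAdd 0 1 = 1 / 12 := by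
  have h0 : ∀ z ∈ sphere (0 : ℂ) 1, z ≠ 0 := fun z hz => ne_zero_of_mem_sphere one_ne_zero ⟨z, hz⟩
  have hsphere : EqOn invSqLogOneAdd (invSqLogOneAddReg + fun z => (z ^ 2)⁻¹ + z⁻¹)
      (sphere 0 |1|) := fun z hz => by
    simp [invSqLogOneAddReg, Function.update_of_ne (h0 z (by simpa using hz))]
  have hint : CircleIntegrable (fun z : ℂ => (z ^ 2)⁻¹ + z⁻¹) 0 1 :=
    (((continuousOn_id.pow 2).inv₀ fun z hz => pow_ne_zero 2 (h0 z hz)).add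
      (continuousOn_id.inv₀ h0)).circleIntegrable zero_le_one
  rw [circleAverage_congr_sphere hsphere, circleAverage_add _ hint,
    circleAverage_invSqLogOneAddReg, circleAverage_inv_sq_add_inv, add_zero]
  exact (continuousOn_invSqLogOneAddReg.mono sphere_subset_closedBall).circleIntegrable zero_le_one

lemma continuous_invSqLogOneAdd_exp_mul_I :
    Continuous fun θ : ℝ => invSqLogOneAdd (Complex.exp (θ * I)) :=
  continuousOn_invSqLogOneAdd_sphere.comp_continuous (by fun_prop) fun θ => by
    simp [norm_exp_ofReal_mul_I]

lemma integral_re_invSqLogOneAdd_exp_mul_I :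
    ∫ θ in (0 : ℝ)..2 * π, (invSqLogOneAdd (Complex.exp (θ * I))).re = π / 6 := by
  have h := reCLM.circleAverage_comp_comm
    (continuousOn_invSqLogOneAdd_sphere.circleIntegrable zero_le_one)
  rw [circleAverage_invSqLogOneAdd, circleAverage_def] at h
  simp only [circleMap_zero, ofReal_one, one_mul, Function.comp_apply, reCLM_apply] at h
  rw [inv_smul_eq_iff₀ (by positivity)] at h
  rw [h]
  norm_num
  ring

lemma invSqLogOneAdd_conj {z : ℂ} (h : (1 + z).arg ≠ π) :
    invSqLogOneAdd (conj z) = conj (invSqLogOneAdd z) := by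
  rw [invSqLogOneAdd, invSqLogOneAdd, ← map_one (starRingEnd ℂ), ← map_add, log_conj _ h, map_one]
  simp

lemma re_invSqLogOneAdd_exp_two_pi_sub_mul_I (θ : ℝ) :
    (invSqLogOneAdd (Complex.exp (↑(2 * π - θ) * I))).re =
      (invSqLogOneAdd (Complex.exp (θ * I))).re := by
  have hconj : Complex.exp (↑(2 * π - θ) * I) = conj (Complex.exp (θ * I)) := by
    have h : ↑(2 * π - θ) * I = conj (↑θ * I) + 2 * π * I := by
      simp only [ofReal_sub, ofReal_mul, ofReal_ofNat, map_mul, conj_ofReal, conj_I]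
      ring
    rw [← Complex.exp_conj, h, Complex.exp_add, Complex.exp_two_pi_mul_I, mul_one]
  have harg : (1 + Complex.exp (θ * I)).arg ≠ π := by
    rw [Ne, arg_eq_pi_iff, add_re, one_re, exp_ofReal_mul_I_re]
    exact fun h => by linarith [h.1, Real.neg_one_le_cos θ]
  rw [hconj, invSqLogOneAdd_conj harg, conj_re]

lemma integral_re_invSqLogOneAdd_exp_mul_I_zero_pi :
    ∫ θ in (0 : ℝ)..π, (invSqLogOneAdd (Complex.exp (θ * I))).re = π / 12 := by
  have h := intervalIntegral.integral_zero_two_mul_of_symm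
    (f := fun θ : ℝ => (invSqLogOneAdd (Complex.exp (θ * I))).re)
    ((continuous_re.comp continuous_invSqLogOneAdd_exp_mul_I).intervalIntegrable 0 (2 * π))
    re_invSqLogOneAdd_exp_two_pi_sub_mul_I
  rw [integral_re_invSqLogOneAdd_exp_mul_I, two_nsmul] at h
  linarith

lemma one_ninth_le_sq_add_log_two_mul_cos_sq (x : ℝ) :
    1 / 9 ≤ x ^ 2 + Real.log (2 * Real.cos x) ^ 2 := by
  rcases le_or_gt (1 / 3) |x| with hx | hx
  · nlinarith [sq_abs x, sq_nonneg (Real.log (2 * Real.cos x))]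
  · have hcos : 17 / 9 ≤ 2 * Real.cos x := by
      nlinarith [Real.one_sub_sq_div_two_le_cos (x := x), sq_abs x, abs_nonneg x]
    have hlog : 8 / 17 ≤ Real.log (2 * Real.cos x) := by
      have := Real.one_sub_inv_le_log_of_pos (x := 2 * Real.cos x) (by linarith)
      have : (2 * Real.cos x)⁻¹ ≤ 9 / 17 := by
        rw [inv_le_comm₀ (by linarith) (by norm_num)]
        linarith
      linarith
    nlinarith [sq_nonneg x]

lemma intervalIntegrable_one_div_sq_add_log_sq (a b : ℝ) :
    IntervalIntegrable (fun x => 1 / (x ^ 2 + Real.log (2 * Real.cos x) ^ 2))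
      MeasureTheory.volume a b := by
  refine (intervalIntegrable_const (c := (9 : ℝ))).mono_fun'
    (by fun_prop : Measurable _).aestronglyMeasurable (MeasureTheory.ae_of_all _ fun x => ?_)
  have h := one_ninth_le_sq_add_log_two_mul_cos_sq x
  dsimp only
  rw [Real.norm_of_nonneg (by positivity), div_le_iff₀ (by linarith)]
  linarith

lemma intervalIntegrable_sq_div_sq_add_log_sq_sq (a b : ℝ) :
    IntervalIntegrable (fun x => x ^ 2 / (x ^ 2 + Real.log (2 * Real.cos x) ^ 2) ^ 2)
      MeasureTheory.volume a b := by
  refine (intervalIntegrable_one_div_sq_add_log_sq a b).mono_fun'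
    (by fun_prop : Measurable _).aestronglyMeasurable (MeasureTheory.ae_of_all _ fun x => ?_)
  have h := one_ninth_le_sq_add_log_two_mul_cos_sq x
  dsimp only
  rw [Real.norm_of_nonneg (by positivity), div_le_div_iff₀ (by positivity) (by linarith)]
  nlinarith [sq_nonneg (Real.log (2 * Real.cos x))]

/-- `∫_0^{π/2} dx/(x² + ln²(2cos x)) − 2∫_0^{π/2} x²/(x² + ln²(2cos x))² dx = π/24`. -/
theorem integral_sub_integral_eq_pi_div_24 :
    (∫ x in (0:ℝ)..(π/2), 1 / (x ^ 2 + Real.log (2 * Real.cos x) ^ 2)) -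
      2 * ∫ x in (0:ℝ)..(π/2),
        x ^ 2 / (x ^ 2 + Real.log (2 * Real.cos x) ^ 2) ^ 2
    = π / 24 := by
  rw [← intervalIntegral.integral_const_mul, ← intervalIntegral.integral_sub
    (intervalIntegrable_one_div_sq_add_log_sq _ _)
    ((intervalIntegrable_sq_div_sq_add_log_sq_sq _ _).const_mul 2)]
  have hpoint : EqOn (fun x => 1 / (x ^ 2 + Real.log (2 * Real.cos x) ^ 2) -
        2 * (x ^ 2 / (x ^ 2 + Real.log (2 * Real.cos x) ^ 2) ^ 2))
      (fun x => (invSqLogOneAdd (Complex.exp (↑(2 * x) * I))).re) (Ioo 0 (π / 2)) := by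
    intro x hx
    dsimp only
    rw [invSqLogOneAdd, log_one_add_exp_two_mul_I (by linarith [hx.1, Real.pi_pos]) hx.2,
      re_inv_sq_add_mul_I]
  rw [intervalIntegral.integral_congr_Ioo_of_le (by positivity) hpoint,
    intervalIntegral.integral_comp_mul_left (fun θ => (invSqLogOneAdd (Complex.exp (θ * I))).re)
      two_ne_zero, mul_zero, mul_div_cancel₀ _ two_ne_zero,
    integral_re_invSqLogOneAdd_exp_mul_I_zero_pi, smul_eq_mul]
  ring
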